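/- arXiv:2409.15860 — 4 statements merged into one kernel-verified Lean document; each statement's English description precedes it below -/
import Mathlib

section
/- Let d ≥ 1 and 4/d < p < q < 4/(d-1). For positive reals A (the squared x-gradient norm), B_p, B_q (the L^{p+2} and L^{q+2} potential terms), define y(t) = t·A − (pd/(2(p+2)))·t^{pd/2−1}·B_p − (qd/(2(q+2)))·t^{qd/2−1}·B_q for t > 0. Then there exists a unique t* > 0 such that y(t*) = 0, y(t) > 0 for t ∈ (0, t*), and y(t) < 0 for t ∈ (t*, ∞). -/
/-- existence, uniqueness and sign properties of the zero of
`y(t) = t·A − (pd/(2(p+2)))·t^{pd/2−1}·B_p − (qd/(2(q+2)))·t^{qd/2−1}·B_q`. -/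
theorem stmt_0 (d : ℕ) (hd : 1 ≤ d) (p q : ℝ)
    (hp : 4 < p * (d : ℝ)) (hpq : p < q) (hq : q * ((d : ℝ) - 1) < 4)
    (A Bp Bq : ℝ) (hA : 0 < A) (hBp : 0 < Bp) (hBq : 0 < Bq) :
    ∃ tstar : ℝ, 0 < tstar ∧
      (tstar * A - p * (d : ℝ) / (2 * (p + 2)) * tstar ^ (p * (d : ℝ) / 2 - 1) * Bp
        - q * (d : ℝ) / (2 * (q + 2)) * tstar ^ (q * (d : ℝ) / 2 - 1) * Bq = 0) ∧
      (∀ t : ℝ, 0 < t → t < tstar →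
        0 < t * A - p * (d : ℝ) / (2 * (p + 2)) * t ^ (p * (d : ℝ) / 2 - 1) * Bp
          - q * (d : ℝ) / (2 * (q + 2)) * t ^ (q * (d : ℝ) / 2 - 1) * Bq) ∧
      (∀ t : ℝ, tstar < t →
        t * A - p * (d : ℝ) / (2 * (p + 2)) * t ^ (p * (d : ℝ) / 2 - 1) * Bp
          - q * (d : ℝ) / (2 * (q + 2)) * t ^ (q * (d : ℝ) / 2 - 1) * Bq < 0) ∧
      (∀ t : ℝ, 0 < t →
        t * A - p * (d : ℝ) / (2 * (p + 2)) * t ^ (p * (d : ℝ) / 2 - 1) * Bp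
          - q * (d : ℝ) / (2 * (q + 2)) * t ^ (q * (d : ℝ) / 2 - 1) * Bq = 0 → t = tstar) := by
  have hd1 : (1:ℝ) ≤ (d:ℝ) := by exact_mod_cast hd
  have hd0 : (0:ℝ) < (d:ℝ) := by linarith
  have hp0 : 0 < p := by nlinarith
  have hq0 : 0 < q := lt_trans hp0 hpq
  set a : ℝ := p * (d:ℝ) / 2 - 2 with ha_def
  set b : ℝ := q * (d:ℝ) / 2 - 2 with hb_def
  have ha : 0 < a := by rw [ha_def]; nlinarith
  have hab : a < b := by rw [ha_def, hb_def]; nlinarith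
  have hb : 0 < b := ha.trans hab
  set cp : ℝ := p * (d:ℝ) / (2 * (p + 2)) with hcp_def
  set cq : ℝ := q * (d:ℝ) / (2 * (q + 2)) with hcq_def
  have hcp : 0 < cp := by rw [hcp_def]; positivity
  have hcq : 0 < cq := by rw [hcq_def]; positivity
  set g : ℝ → ℝ := fun t => A - cp * Bp * t ^ a - cq * Bq * t ^ b with hg_def
  have hganti : StrictAntiOn g (Set.Ici 0) := by
    intro x hx y hy hxy
    have h1 : x ^ a < y ^ a := Real.rpow_lt_rpow hx hxy ha
    have h2 : x ^ b < y ^ b := Real.rpow_lt_rpow hx hxy hb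
    have e1 := mul_lt_mul_of_pos_left h1 (mul_pos hcp hBp)
    have e2 := mul_lt_mul_of_pos_left h2 (mul_pos hcq hBq)
    simp only [hg_def]
    linarith
  have hgcont : ContinuousOn g (Set.Ici 0) := by
    intro x hx
    apply ContinuousAt.continuousWithinAt
    have c1 : ContinuousAt (fun t : ℝ => t ^ a) x :=
      Real.continuousAt_rpow_const x a (Or.inr ha.le)
    have c2 : ContinuousAt (fun t : ℝ => t ^ b) x :=
      Real.continuousAt_rpow_const x b (Or.inr hb.le)
    exact ((continuousAt_const.sub (continuousAt_const.mul c1)).sub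
      (continuousAt_const.mul c2))
  have hg0 : g 0 = A := by
    simp [hg_def, Real.zero_rpow ha.ne', Real.zero_rpow hb.ne']
  set T : ℝ := ((A + 1) / (cp * Bp)) ^ a⁻¹ with hT_def
  have hbase : 0 < (A + 1) / (cp * Bp) := by positivity
  have hT0 : 0 < T := Real.rpow_pos_of_pos hbase _
  have hTa : T ^ a = (A + 1) / (cp * Bp) := Real.rpow_inv_rpow hbase.le ha.ne'
  have hgT : g T < 0 := by
    have hTb : 0 < T ^ b := Real.rpow_pos_of_pos hT0 _
    have : cp * Bp * T ^ a = A + 1 := by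
      rw [hTa]; field_simp
    simp only [hg_def]
    nlinarith [mul_pos (mul_pos hcq hBq) hTb]
  obtain ⟨tstar, htmem, hgts⟩ : ∃ t ∈ Set.Icc (0:ℝ) T, g t = 0 := by
    have := intermediate_value_Icc' hT0.le (hgcont.mono (Set.Icc_subset_Ici_self))
    have h0mem : (0:ℝ) ∈ Set.Icc (g T) (g 0) := by
      rw [hg0]; exact ⟨hgT.le, hA.le⟩
    obtain ⟨t, ht, hgt⟩ := this h0mem
    exact ⟨t, ht, hgt⟩
  have hts0 : 0 < tstar := by
    rcases lt_or_eq_of_le htmem.1 with h | h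
    · exact h
    · exfalso; rw [← h] at hgts; rw [hg0] at hgts; linarith
  have hy : ∀ t : ℝ, 0 < t →
      t * A - p * (d : ℝ) / (2 * (p + 2)) * t ^ (p * (d : ℝ) / 2 - 1) * Bp
        - q * (d : ℝ) / (2 * (q + 2)) * t ^ (q * (d : ℝ) / 2 - 1) * Bq = t * g t := by
    intro t ht
    have h1 : t ^ (p * (d:ℝ) / 2 - 1) = t ^ a * t := by
      rw [show p * (d:ℝ) / 2 - 1 = a + 1 by rw [ha_def]; ring,
        Real.rpow_add ht, Real.rpow_one]
    have h2 : t ^ (q * (d:ℝ) / 2 - 1) = t ^ b * t := by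
      rw [show q * (d:ℝ) / 2 - 1 = b + 1 by rw [hb_def]; ring,
        Real.rpow_add ht, Real.rpow_one]
    rw [h1, h2]
    simp only [hg_def, hcp_def, hcq_def]
    ring
  refine ⟨tstar, hts0, ?_, ?_, ?_, ?_⟩
  · rw [hy tstar hts0, hgts, mul_zero]
  · intro t ht htlt
    rw [hy t ht]
    have : g tstar < g t := hganti ht.le hts0.le htlt
    rw [hgts] at this
    exact mul_pos ht this
  · intro t htgt
    have ht : 0 < t := hts0.trans htgt
    rw [hy t ht]
    have : g t < g tstar := hganti hts0.le ht.le htgt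
    rw [hgts] at this
    exact mul_neg_of_pos_of_neg ht this
  · intro t ht heq
    rw [hy t ht] at heq
    have hgt0 : g t = 0 := by
      rcases mul_eq_zero.mp heq with h | h
      · exact absurd h ht.ne'
      · exact h
    have := hganti.injOn (Set.mem_Ici.mpr ht.le) (Set.mem_Ici.mpr hts0.le)
    exact this (by rw [hgt0, hgts])
end

section
/- Let d ≥ 1 and 4/d < p < q < 4/(d-1). Define g(t,a,b,c) = a·t² − b·t^{pd/2} − c·t^{qd/2} and f(a,b,c) = sup_{t>0} g(t,a,b,c). Then for any fixed (a,b,c) ∈ (0,∞)³, the supremum is attained at a unique t₀ > 0 with ∂_t g(t₀,a,b,c) = 0 and ∂_t² g(t₀,a,b,c) < 0, and the function f is continuous on (0,∞)³. -/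
/-!
For `t > 0` write `g(t) = t² (a - b t^(P-2) - c t^(Q-2))` with `P = pd/2 > 2`, `Q = qd/2 > 2`:
the bracket tends to `a > 0` as `t → 0` and to `-∞` as `t → ∞`, so `g` is positive somewhere and
nonpositive far out, and it attains its supremum on `(0, ∞)`. At a maximizer
`0 = g'(t) = t φ(t)` with `φ(t) = 2a - bP t^(P-2) - cQ t^(Q-2)` strictly decreasing, so the
maximizer is unique, and there `g''(t) = -bP(P-2) t^(P-2) - cQ(Q-2) t^(Q-2) < 0`.

Since `g` is linear in `(a, b, c)`, `f` is a supremum of linear functions, hence convex on the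
open convex set `(0, ∞)³`, and a convex function on an open subset of `ℝ³` is continuous.
-/

open Set Filter Topology

lemma convexOn_csSup_image {ι E : Type*} [AddCommGroup E] [Module ℝ E] {s : Set E} {T : Set ι}
    {g : ι → E → ℝ} (hT : T.Nonempty) (hg : ∀ t ∈ T, ConvexOn ℝ s (g t))
    (hbdd : ∀ x ∈ s, BddAbove ((g · x) '' T)) :
    ConvexOn ℝ s fun x => sSup ((g · x) '' T) := by
  obtain ⟨t₀, ht₀⟩ := hT
  refine ⟨(hg t₀ ht₀).1, fun x hx y hy θ η hθ hη hθη => ?_⟩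
  refine csSup_le ⟨_, t₀, ht₀, rfl⟩ ?_
  rintro _ ⟨t, ht, rfl⟩
  calc g t (θ • x + η • y) ≤ θ • g t x + η • g t y := (hg t ht).2 hx hy hθ hη hθη
    _ ≤ θ • sSup ((g · x) '' T) + η • sSup ((g · y) '' T) := by
      gcongr
      exacts [le_csSup (hbdd x hx) ⟨t, ht, rfl⟩, le_csSup (hbdd y hy) ⟨t, ht, rfl⟩]

/-- The paper's `g(t, a, b, c)`, with `P = pd/2` and `Q = qd/2`. -/
noncomputable def energyProfile (P Q a b c t : ℝ) : ℝ := a * t ^ 2 - b * t ^ P - c * t ^ Q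

noncomputable def derivFactor (P Q a b c t : ℝ) : ℝ :=
  2 * a - b * P * t ^ (P - 2) - c * Q * t ^ (Q - 2)

section

variable {P Q a b c : ℝ}

lemma energyProfile_eq_sq_mul {t : ℝ} (ht : 0 < t) :
    energyProfile P Q a b c t = t ^ 2 * (a - b * t ^ (P - 2) - c * t ^ (Q - 2)) := by
  have h2 : t ^ (2 : ℝ) ≠ 0 := (Real.rpow_pos_of_pos ht 2).ne'
  rw [energyProfile, Real.rpow_sub ht, Real.rpow_sub ht, ← Real.rpow_natCast]
  field_simp
  push_cast
  ring

lemma energyProfile_zero (hP : P ≠ 0) (hQ : Q ≠ 0) : energyProfile P Q a b c 0 = 0 := by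
  simp [energyProfile, Real.zero_rpow hP, Real.zero_rpow hQ]

lemma continuous_energyProfile (hP : 0 ≤ P) (hQ : 0 ≤ Q) :
    Continuous (energyProfile P Q a b c) := by
  unfold energyProfile
  have := Real.continuous_rpow_const hP
  have := Real.continuous_rpow_const hQ
  fun_prop

lemma eventually_energyProfile_pos (hP : 2 < P) (hQ : 2 < Q) (ha : 0 < a) :
    ∀ᶠ t in 𝓝[>] 0, 0 < energyProfile P Q a b c t := by
  have hcont : Continuous fun t : ℝ => a - b * t ^ (P - 2) - c * t ^ (Q - 2) := by
    have := Real.continuous_rpow_const (by linarith : 0 ≤ P - 2)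
    have := Real.continuous_rpow_const (by linarith : 0 ≤ Q - 2)
    fun_prop
  have hlim : Tendsto (fun t : ℝ => a - b * t ^ (P - 2) - c * t ^ (Q - 2)) (𝓝[>] 0) (𝓝 a) := by
    simpa [Real.zero_rpow (by linarith : P - 2 ≠ 0), Real.zero_rpow (by linarith : Q - 2 ≠ 0)]
      using (hcont.tendsto 0).mono_left nhdsWithin_le_nhds
  filter_upwards [hlim.eventually_const_lt ha, self_mem_nhdsWithin] with t hpos ht
  rw [energyProfile_eq_sq_mul ht]
  exact mul_pos (pow_pos ht 2) hpos

lemma eventually_energyProfile_nonpos (hP : 2 < P) (hb : 0 < b) (hc : 0 ≤ c) :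
    ∀ᶠ t in atTop, energyProfile P Q a b c t ≤ 0 := by
  filter_upwards [(tendsto_rpow_atTop (by linarith : 0 < P - 2)).eventually_ge_atTop (a / b),
    eventually_gt_atTop 0] with t hlarge ht
  rw [energyProfile_eq_sq_mul ht]
  have : a ≤ b * t ^ (P - 2) := by rwa [div_le_iff₀' hb] at hlarge
  have : 0 ≤ c * t ^ (Q - 2) := mul_nonneg hc (Real.rpow_nonneg ht.le _)
  exact mul_nonpos_of_nonneg_of_nonpos (sq_nonneg t) (by linarith)

lemma exists_isMaxOn_energyProfile (hP : 2 < P) (hQ : 2 < Q) (ha : 0 < a) (hb : 0 < b)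
    (hc : 0 ≤ c) : ∃ t₀, 0 < t₀ ∧ IsMaxOn (energyProfile P Q a b c) (Ioi 0) t₀ := by
  obtain ⟨t₁, hpos, ht₁⟩ := ((eventually_energyProfile_pos hP hQ (b := b) (c := c) ha).and
    self_mem_nhdsWithin).exists
  have hfar : ∀ᶠ t in cocompact ℝ ⊓ 𝓟 (Ici 0),
      energyProfile P Q a b c t ≤ energyProfile P Q a b c t₁ := by
    rw [cocompact_eq_atBot_atTop, inf_sup_right, (disjoint_atBot_principal_Ici (0 : ℝ)).eq_bot,
      bot_sup_eq]
    exact ((eventually_energyProfile_nonpos hP hb hc).mono fun t ht => ht.trans hpos.le)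
      |>.filter_mono inf_le_left
  obtain ⟨t₀, ht₀, hmax⟩ := (continuous_energyProfile (by linarith) (by linarith)).continuousOn
    |>.exists_isMaxOn' isClosed_Ici (mem_Ici.2 (le_of_lt ht₁)) hfar
  refine ⟨t₀, lt_of_le_of_ne ht₀ ?_, hmax.on_subset Ioi_subset_Ici_self⟩
  rintro rfl
  have := hmax (mem_Ici.2 (le_of_lt ht₁))
  rw [energyProfile_zero (by linarith) (by linarith)] at this
  exact this.not_gt hpos

lemma hasDerivAt_energyProfile (hP : 1 ≤ P) (hQ : 1 ≤ Q) (t : ℝ) :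
    HasDerivAt (energyProfile P Q a b c)
      (2 * a * t - b * (P * t ^ (P - 1)) - c * (Q * t ^ (Q - 1))) t := by
  have h2 : HasDerivAt (fun t : ℝ => t ^ 2) (2 * t) t := by simpa using hasDerivAt_pow 2 t
  exact ((h2.const_mul a).sub ((Real.hasDerivAt_rpow_const (Or.inr hP)).const_mul b)).sub
    ((Real.hasDerivAt_rpow_const (Or.inr hQ)).const_mul c) |>.congr_deriv (by ring)

lemma deriv_energyProfile_eq_mul (hP : 1 ≤ P) (hQ : 1 ≤ Q) {t : ℝ} (ht : 0 < t) :
    deriv (energyProfile P Q a b c) t = t * derivFactor P Q a b c t := by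
  have hsplit (R : ℝ) : t ^ (R - 1) = t * t ^ (R - 2) := by
    rw [show R - 1 = R - 2 + 1 by ring, Real.rpow_add_one ht.ne']; ring
  rw [(hasDerivAt_energyProfile hP hQ t).deriv, derivFactor, hsplit P, hsplit Q]
  ring

lemma hasDerivAt_deriv_energyProfile (hP : 1 ≤ P) (hQ : 1 ≤ Q) {t : ℝ} (ht : 0 < t) :
    HasDerivAt (deriv (energyProfile P Q a b c))
      (2 * a - b * P * (P - 1) * t ^ (P - 2) - c * Q * (Q - 1) * t ^ (Q - 2)) t := by
  rw [funext (hasDerivAt_energyProfile (a := a) (b := b) (c := c) hP hQ · |>.deriv)]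
  have hx := (Real.hasDerivAt_rpow_const (p := P - 1) (Or.inl ht.ne')).const_mul P |>.const_mul b
  have hy := (Real.hasDerivAt_rpow_const (p := Q - 1) (Or.inl ht.ne')).const_mul Q |>.const_mul c
  refine ((((hasDerivAt_id t).const_mul (2 * a)).sub hx).sub hy).congr_deriv ?_
  rw [show P - 1 - 1 = P - 2 by ring, show Q - 1 - 1 = Q - 2 by ring]
  ring

lemma derivFactor_strictAntiOn (hP : 2 < P) (hQ : 2 < Q) (hb : 0 < b) (hc : 0 < c) :
    StrictAntiOn (derivFactor P Q a b c) (Ioi 0) := by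
  intro x hx y _ hxy
  have hbP : 0 < b * P := by positivity
  have hcQ : 0 < c * Q := by positivity
  have := Real.rpow_lt_rpow (le_of_lt hx) hxy (by linarith : 0 < P - 2)
  have := Real.rpow_lt_rpow (le_of_lt hx) hxy (by linarith : 0 < Q - 2)
  unfold derivFactor
  nlinarith

lemma derivFactor_eq_zero_of_isMaxOn (hP : 1 ≤ P) (hQ : 1 ≤ Q) {t₀ : ℝ} (ht₀ : 0 < t₀)
    (hmax : IsMaxOn (energyProfile P Q a b c) (Ioi 0) t₀) : derivFactor P Q a b c t₀ = 0 := by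
  have hcrit := (hmax.isLocalMax (Ioi_mem_nhds ht₀)).deriv_eq_zero
  rw [deriv_energyProfile_eq_mul hP hQ ht₀] at hcrit
  exact (mul_eq_zero.1 hcrit).resolve_left ht₀.ne'

lemma deriv_deriv_energyProfile_neg (hP : 2 < P) (hQ : 2 < Q) (hb : 0 < b) (hc : 0 < c)
    {t₀ : ℝ} (ht₀ : 0 < t₀) (hcrit : derivFactor P Q a b c t₀ = 0) :
    deriv (deriv (energyProfile P Q a b c)) t₀ < 0 := by
  rw [(hasDerivAt_deriv_energyProfile (by linarith) (by linarith) ht₀).deriv]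
  have hx : 0 < b * P * (P - 2) * t₀ ^ (P - 2) :=
    mul_pos (mul_pos (mul_pos hb (by linarith)) (by linarith)) (Real.rpow_pos_of_pos ht₀ _)
  have hy : 0 < c * Q * (Q - 2) * t₀ ^ (Q - 2) :=
    mul_pos (mul_pos (mul_pos hc (by linarith)) (by linarith)) (Real.rpow_pos_of_pos ht₀ _)
  unfold derivFactor at hcrit
  linarith

theorem exists_unique_isMaxOn_energyProfile (hP : 2 < P) (hQ : 2 < Q) (ha : 0 < a) (hb : 0 < b)
    (hc : 0 < c) :
    ∃ t₀, 0 < t₀ ∧ IsMaxOn (energyProfile P Q a b c) (Ioi 0) t₀ ∧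
      energyProfile P Q a b c t₀ = sSup (energyProfile P Q a b c '' Ioi 0) ∧
      deriv (energyProfile P Q a b c) t₀ = 0 ∧
      deriv (deriv (energyProfile P Q a b c)) t₀ < 0 ∧
      ∀ t₁ ∈ Ioi 0, IsMaxOn (energyProfile P Q a b c) (Ioi 0) t₁ → t₁ = t₀ := by
  obtain ⟨t₀, ht₀, hmax⟩ := exists_isMaxOn_energyProfile hP hQ ha hb hc.le
  have hcrit := derivFactor_eq_zero_of_isMaxOn (by linarith) (by linarith) ht₀ hmax
  refine ⟨t₀, ht₀, hmax, ((hmax.isLUB ht₀).csSup_eq ⟨_, t₀, ht₀, rfl⟩).symm, ?_,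
    deriv_deriv_energyProfile_neg hP hQ hb hc ht₀ hcrit, fun t₁ ht₁ hmax₁ => ?_⟩
  · rw [deriv_energyProfile_eq_mul (by linarith) (by linarith) ht₀, hcrit, mul_zero]
  · refine (derivFactor_strictAntiOn (a := a) hP hQ hb hc).injOn ht₁ ht₀ ?_
    rw [derivFactor_eq_zero_of_isMaxOn (by linarith) (by linarith) ht₁ hmax₁, hcrit]

theorem continuousOn_sSup_energyProfile (hP : 2 < P) (hQ : 2 < Q) :
    ContinuousOn (fun x : ℝ × ℝ × ℝ => sSup (energyProfile P Q x.1 x.2.1 x.2.2 '' Ioi 0))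
      (Ioi 0 ×ˢ Ioi 0 ×ˢ Ioi 0) := by
  have hopen : IsOpen (Ioi (0 : ℝ) ×ˢ Ioi (0 : ℝ) ×ˢ Ioi (0 : ℝ)) :=
    isOpen_Ioi.prod (isOpen_Ioi.prod isOpen_Ioi)
  have hconvex : Convex ℝ (Ioi (0 : ℝ) ×ˢ Ioi (0 : ℝ) ×ˢ Ioi (0 : ℝ)) :=
    (convex_Ioi 0).prod ((convex_Ioi 0).prod (convex_Ioi 0))
  refine ConvexOn.continuousOn hopen (convexOn_csSup_image (g := fun t x =>
    energyProfile P Q x.1 x.2.1 x.2.2 t) nonempty_Ioi (fun t _ => ⟨hconvex, ?_⟩) ?_)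
  · intro x _ y _ θ η _ _ _
    simp only [energyProfile, Prod.fst_add, Prod.snd_add, Prod.smul_fst, Prod.smul_snd, smul_eq_mul]
    exact le_of_eq (by ring)
  · rintro x ⟨ha, hb, hc⟩
    obtain ⟨t₀, -, hmax⟩ := exists_isMaxOn_energyProfile hP hQ ha hb (le_of_lt hc)
    exact hmax.bddAbove

end

theorem stmt_1_general (d : ℕ) (p q : ℝ)
    (hp : 4 < p * (d : ℝ)) (hpq : p < q) :
    (∀ a b c : ℝ, 0 < a → 0 < b → 0 < c →
      ∃ t0 : ℝ, 0 < t0 ∧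
        (∀ t ∈ Ioi (0 : ℝ),
          a * t ^ 2 - b * t ^ (p * (d : ℝ) / 2) - c * t ^ (q * (d : ℝ) / 2) ≤
            a * t0 ^ 2 - b * t0 ^ (p * (d : ℝ) / 2) - c * t0 ^ (q * (d : ℝ) / 2)) ∧
        a * t0 ^ 2 - b * t0 ^ (p * (d : ℝ) / 2) - c * t0 ^ (q * (d : ℝ) / 2) =
          sSup ((fun t : ℝ =>
            a * t ^ 2 - b * t ^ (p * (d : ℝ) / 2) - c * t ^ (q * (d : ℝ) / 2)) '' Ioi 0) ∧
        deriv (fun t : ℝ =>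
          a * t ^ 2 - b * t ^ (p * (d : ℝ) / 2) - c * t ^ (q * (d : ℝ) / 2)) t0 = 0 ∧
        deriv (deriv (fun t : ℝ =>
          a * t ^ 2 - b * t ^ (p * (d : ℝ) / 2) - c * t ^ (q * (d : ℝ) / 2))) t0 < 0 ∧
        (∀ t1 ∈ Ioi (0 : ℝ),
          (∀ t ∈ Ioi (0 : ℝ),
            a * t ^ 2 - b * t ^ (p * (d : ℝ) / 2) - c * t ^ (q * (d : ℝ) / 2) ≤
              a * t1 ^ 2 - b * t1 ^ (p * (d : ℝ) / 2) - c * t1 ^ (q * (d : ℝ) / 2)) →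
          t1 = t0)) ∧
    ContinuousOn
      (fun x : ℝ × ℝ × ℝ => sSup ((fun t : ℝ =>
        x.1 * t ^ 2 - x.2.1 * t ^ (p * (d : ℝ) / 2) - x.2.2 * t ^ (q * (d : ℝ) / 2)) '' Ioi 0))
      (Ioi 0 ×ˢ Ioi 0 ×ˢ Ioi 0) := by
  have hP : 2 < p * d / 2 := by linarith
  have hQ : 2 < q * d / 2 := by
    have : p * d ≤ q * d := mul_le_mul_of_nonneg_right hpq.le d.cast_nonneg
    linarith
  refine ⟨fun a b c ha hb hc => ?_, continuousOn_sSup_energyProfile hP hQ⟩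
  obtain ⟨t₀, ht₀, hmax, hsup, hderiv, hderiv2, hunique⟩ :=
    exists_unique_isMaxOn_energyProfile hP hQ ha hb hc
  exact ⟨t₀, ht₀, isMaxOn_iff.1 hmax, hsup, hderiv, hderiv2,
    fun t₁ ht₁ hmax₁ => hunique t₁ ht₁ (isMaxOn_iff.2 hmax₁)⟩

/-- for `g(t,a,b,c) = a t² − b t^{pd/2} − c t^{qd/2}` the supremum over `t > 0`
is attained at a unique critical point `t₀ > 0` with `∂_t g(t₀) = 0`, `∂_t² g(t₀) < 0`, and
`f(a,b,c) = sup_{t>0} g(t,a,b,c)` is continuous on `(0,∞)³`. -/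
theorem stmt_1 (d : ℕ) (hd : 1 ≤ d) (p q : ℝ)
    (hp : 4 < p * (d : ℝ)) (hpq : p < q) (hq : q * ((d : ℝ) - 1) < 4) :
    (∀ a b c : ℝ, 0 < a → 0 < b → 0 < c →
      ∃ t0 : ℝ, 0 < t0 ∧
        (∀ t ∈ Ioi (0 : ℝ),
          a * t ^ 2 - b * t ^ (p * (d : ℝ) / 2) - c * t ^ (q * (d : ℝ) / 2) ≤
            a * t0 ^ 2 - b * t0 ^ (p * (d : ℝ) / 2) - c * t0 ^ (q * (d : ℝ) / 2)) ∧
        a * t0 ^ 2 - b * t0 ^ (p * (d : ℝ) / 2) - c * t0 ^ (q * (d : ℝ) / 2) =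
          sSup ((fun t : ℝ =>
            a * t ^ 2 - b * t ^ (p * (d : ℝ) / 2) - c * t ^ (q * (d : ℝ) / 2)) '' Ioi 0) ∧
        deriv (fun t : ℝ =>
          a * t ^ 2 - b * t ^ (p * (d : ℝ) / 2) - c * t ^ (q * (d : ℝ) / 2)) t0 = 0 ∧
        deriv (deriv (fun t : ℝ =>
          a * t ^ 2 - b * t ^ (p * (d : ℝ) / 2) - c * t ^ (q * (d : ℝ) / 2))) t0 < 0 ∧
        (∀ t1 ∈ Ioi (0 : ℝ),
          (∀ t ∈ Ioi (0 : ℝ),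
            a * t ^ 2 - b * t ^ (p * (d : ℝ) / 2) - c * t ^ (q * (d : ℝ) / 2) ≤
              a * t1 ^ 2 - b * t1 ^ (p * (d : ℝ) / 2) - c * t1 ^ (q * (d : ℝ) / 2)) →
          t1 = t0)) ∧
    ContinuousOn
      (fun x : ℝ × ℝ × ℝ => sSup ((fun t : ℝ =>
        x.1 * t ^ 2 - x.2.1 * t ^ (p * (d : ℝ) / 2) - x.2.2 * t ^ (q * (d : ℝ) / 2)) '' Ioi 0))
      (Ioi 0 ×ˢ Ioi 0 ×ˢ Ioi 0) :=
  stmt_1_general d p q hp hpq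
end

section
/- Let d ≥ 1 and 4/d < p < q < 4/(d−1). There exists a ∈ (0, π) with a > π − 3π(3/(p+3))^{2/p}, and for such a the piecewise-linear function ρ : [0,2π] → [0,∞) defined by ρ(y) = 0 on [0,a]∪[2π−a,2π], ρ(y) = (π−a)^{−1}((p+3)/3)^{1/p}(y−a) on [a,π], and ρ(y) = (π−a)^{−1}((p+3)/3)^{1/p}(2π−a−y) on [π,2π−a], satisfies ‖ρ‖_{L²}² = ‖ρ‖_{L^{p+2}}^{p+2} and ‖ρ‖_{L²}² < min{2π, ‖ρ‖_{L^{q+2}}^{q+2}}. -/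
open Real Set

lemma aux_total_integral (a M r : ℝ) (ha0 : 0 ≤ a) (haπ : a < π) (hM : 0 ≤ M) (hr : 0 < r)
    (ρ : ℝ → ℝ)
    (hρ : ∀ y, ρ y =
      if y ≤ a ∨ 2 * π - a ≤ y then 0
      else if y ≤ π then M * (y - a) else M * (2 * π - a - y)) :
    (∫ y in (0 : ℝ)..(2 * π), ρ y ^ r)
      = 2 * (M ^ r * ((π - a) ^ (r + 1) / (r + 1))) := by
  have hπ : 0 < π := pi_pos
  have h1 : π ≤ 2 * π - a := by linarith
  -- pointwise formula via max/min
  have key : ∀ y : ℝ, ρ y ^ r = (M * max 0 (min (y - a) (2 * π - a - y))) ^ r := by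
    intro y
    rw [hρ y]
    by_cases hy1 : y ≤ a ∨ 2 * π - a ≤ y
    · rw [if_pos hy1]
      have : min (y - a) (2 * π - a - y) ≤ 0 := by
        rcases hy1 with h | h
        · exact le_trans (min_le_left _ _) (by linarith)
        · exact le_trans (min_le_right _ _) (by linarith)
      rw [max_eq_left this, mul_zero]
    · push_neg at hy1
      obtain ⟨hya, hyb⟩ := hy1
      rw [if_neg (by push_neg; exact ⟨hya, hyb⟩)]
      by_cases hy2 : y ≤ π
      · rw [if_pos hy2]
        have hmin : min (y - a) (2 * π - a - y) = y - a := min_eq_left (by linarith)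
        rw [hmin, max_eq_right (by linarith)]
      · rw [if_neg hy2]
        push_neg at hy2
        have hmin : min (y - a) (2 * π - a - y) = 2 * π - a - y :=
          min_eq_right (by linarith)
        rw [hmin, max_eq_right (by linarith)]
  simp only [key]
  have hg : Continuous fun y : ℝ => (M * max 0 (min (y - a) (2 * π - a - y))) ^ r := by
    apply (Real.continuous_rpow_const hr.le).comp
    exact continuous_const.mul (continuous_const.max
      ((continuous_id.sub continuous_const).min (continuous_const.sub continuous_id)))
  set g : ℝ → ℝ := fun y => (M * max 0 (min (y - a) (2 * π - a - y))) ^ r with hgdef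
  have hint : ∀ u v : ℝ, IntervalIntegrable g MeasureTheory.volume u v :=
    fun u v => hg.intervalIntegrable u v
  have split : (∫ y in (0:ℝ)..(2*π), g y)
      = (∫ y in (0:ℝ)..a, g y) + (∫ y in a..π, g y) + (∫ y in π..(2*π - a), g y)
        + (∫ y in (2*π - a)..(2*π), g y) := by
    rw [intervalIntegral.integral_add_adjacent_intervals (hint 0 a) (hint a π),
      intervalIntegral.integral_add_adjacent_intervals (hint 0 π) (hint π (2*π - a)),
      intervalIntegral.integral_add_adjacent_intervals (hint 0 (2*π - a)) (hint (2*π - a) (2*π))]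
  have hI1 : (∫ y in (0:ℝ)..a, g y) = 0 := by
    rw [intervalIntegral.integral_congr (g := fun _ => (0:ℝ)) ?_, intervalIntegral.integral_const,
      smul_zero]
    intro y hy
    rw [uIcc_of_le ha0] at hy
    have : min (y - a) (2 * π - a - y) ≤ 0 := le_trans (min_le_left _ _) (by linarith [hy.2])
    simp [hgdef, max_eq_left this, Real.zero_rpow hr.ne']
  have hI4 : (∫ y in (2*π - a)..(2*π), g y) = 0 := by
    rw [intervalIntegral.integral_congr (g := fun _ => (0:ℝ)) ?_, intervalIntegral.integral_const,
      smul_zero]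
    intro y hy
    rw [uIcc_of_le (by linarith)] at hy
    have : min (y - a) (2 * π - a - y) ≤ 0 := le_trans (min_le_right _ _) (by linarith [hy.1])
    simp [hgdef, max_eq_left this, Real.zero_rpow hr.ne']
  have base : (∫ u in (0:ℝ)..(π - a), u ^ r) = (π - a) ^ (r + 1) / (r + 1) := by
    rw [integral_rpow (Or.inl (by linarith))]
    rw [Real.zero_rpow (by linarith), sub_zero]
  have hI2 : (∫ y in a..π, g y) = M ^ r * ((π - a) ^ (r + 1) / (r + 1)) := by
    rw [intervalIntegral.integral_congr (g := fun y => M ^ r * (y - a) ^ r) ?_]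
    · rw [intervalIntegral.integral_const_mul,
        intervalIntegral.integral_comp_sub_right (fun u => u ^ r) a, sub_self, base]
    · intro y hy
      rw [uIcc_of_le haπ.le] at hy
      have hmin : min (y - a) (2 * π - a - y) = y - a := min_eq_left (by linarith [hy.2])
      simp only [hgdef, hmin, max_eq_right (by linarith [hy.1] : (0:ℝ) ≤ y - a)]
      exact Real.mul_rpow hM (by linarith [hy.1])
  have hI3 : (∫ y in π..(2*π - a), g y) = M ^ r * ((π - a) ^ (r + 1) / (r + 1)) := by
    rw [intervalIntegral.integral_congr (g := fun y => M ^ r * (2 * π - a - y) ^ r) ?_]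
    · rw [intervalIntegral.integral_const_mul,
        intervalIntegral.integral_comp_sub_left (fun u => u ^ r) (2 * π - a)]
      have e1 : 2 * π - a - (2 * π - a) = 0 := by ring
      have e2 : 2 * π - a - π = π - a := by ring
      rw [e1, e2, base]
    · intro y hy
      rw [uIcc_of_le h1] at hy
      have hmin : min (y - a) (2 * π - a - y) = 2 * π - a - y :=
        min_eq_right (by linarith [hy.1])
      simp only [hgdef, hmin, max_eq_right (by linarith [hy.2] : (0:ℝ) ≤ 2 * π - a - y)]
      exact Real.mul_rpow hM (by linarith [hy.2])
  rw [split, hI1, hI2, hI3, hI4]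
  ring

/-- there exists `a ∈ (0,π)` with `a > π − 3π(3/(p+3))^{2/p}`, and for any such `a`
the piecewise-linear profile `ρ` satisfies `‖ρ‖_{L²}² = ‖ρ‖_{L^{p+2}}^{p+2}` and
`‖ρ‖_{L²}² < min{2π, ‖ρ‖_{L^{q+2}}^{q+2}}` (norms over `[0,2π]`). -/
theorem stmt_13 (d : ℕ) (hd : 1 ≤ d) (p q : ℝ)
    (hp : 4 < p * (d : ℝ)) (hpq : p < q) (hq : q * ((d : ℝ) - 1) < 4) :
    (∃ a ∈ Ioo (0 : ℝ) π, π - 3 * π * (3 / (p + 3)) ^ (2 / p) < a) ∧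
    ∀ a ∈ Ioo (0 : ℝ) π, π - 3 * π * (3 / (p + 3)) ^ (2 / p) < a →
      ∀ ρ : ℝ → ℝ,
        (∀ y : ℝ, ρ y =
          if y ≤ a ∨ 2 * π - a ≤ y then 0
          else if y ≤ π then (π - a)⁻¹ * ((p + 3) / 3) ^ (1 / p) * (y - a)
          else (π - a)⁻¹ * ((p + 3) / 3) ^ (1 / p) * (2 * π - a - y)) →
        (∫ y in (0 : ℝ)..(2 * π), ρ y ^ (2 : ℝ)) =
            (∫ y in (0 : ℝ)..(2 * π), ρ y ^ (p + 2)) ∧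
        (∫ y in (0 : ℝ)..(2 * π), ρ y ^ (2 : ℝ)) < 2 * π ∧
        (∫ y in (0 : ℝ)..(2 * π), ρ y ^ (2 : ℝ)) <
            (∫ y in (0 : ℝ)..(2 * π), ρ y ^ (q + 2)) := by
  have hπ : 0 < π := pi_pos
  have hdpos : (0:ℝ) < d := by exact_mod_cast hd
  have hp0 : 0 < p := by nlinarith
  have hq0 : 0 < q := hp0.trans hpq
  have hbase : (1:ℝ) < (p + 3) / 3 := by
    rw [lt_div_iff₀ (by norm_num : (0:ℝ) < 3)]; linarith
  have hbase0 : (0:ℝ) ≤ (p + 3) / 3 := by positivity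
  set K : ℝ := ((p + 3) / 3) ^ (1 / p) with hKdef
  have hK : 0 < K := Real.rpow_pos_of_pos (by positivity) _
  have hKr : ∀ r : ℝ, K ^ r = ((p + 3) / 3) ^ (r / p) := by
    intro r
    rw [hKdef, ← Real.rpow_mul hbase0, one_div, inv_mul_eq_div]
  have hε : 0 < 3 * π * (3 / (p + 3)) ^ (2 / p) := by positivity
  have hm0 : 0 < min π (3 * π * (3 / (p + 3)) ^ (2 / p)) := lt_min hπ hε
  have hm1 : min π (3 * π * (3 / (p + 3)) ^ (2 / p)) ≤ π := min_le_left _ _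
  have hm2 : min π (3 * π * (3 / (p + 3)) ^ (2 / p)) ≤ 3 * π * (3 / (p + 3)) ^ (2 / p) :=
    min_le_right _ _
  constructor
  · exact ⟨π - min π (3 * π * (3 / (p + 3)) ^ (2 / p)) / 2,
      ⟨by linarith, by linarith⟩, by linarith⟩
  intro a ha ha2 ρ hρ
  obtain ⟨ha0, haπ⟩ := ha
  have hpa : (0:ℝ) < π - a := by linarith
  have hM : (0:ℝ) ≤ (π - a)⁻¹ * K := mul_nonneg (inv_nonneg.2 hpa.le) hK.le
  have hpar : ∀ r : ℝ, (0:ℝ) < (π - a) ^ r := fun r => Real.rpow_pos_of_pos hpa r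
  have T : ∀ r : ℝ, 0 < r →
      (∫ y in (0:ℝ)..(2 * π), ρ y ^ r) = 2 * (K ^ r * (π - a)) / (r + 1) := by
    intro r hr
    rw [aux_total_integral a ((π - a)⁻¹ * K) r ha0.le haπ hM hr ρ hρ,
      Real.mul_rpow (inv_nonneg.2 hpa.le) hK.le, Real.inv_rpow hpa.le,
      show (π - a) ^ (r + 1) = (π - a) ^ r * (π - a) by
        rw [Real.rpow_add hpa, Real.rpow_one]]
    have hx : (π - a) ^ r ≠ 0 := (hpar r).ne'
    field_simp
  have T2 := T 2 two_pos
  have Tp := T (p + 2) (by linarith)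
  have Tq := T (q + 2) (by linarith)
  have hK2 : K ^ (2:ℝ) = ((p + 3) / 3) ^ (2 / p) := hKr 2
  have hK2pos : 0 < K ^ (2:ℝ) := Real.rpow_pos_of_pos hK 2
  have hKp : K ^ (p + 2) = (p + 3) / 3 * K ^ (2:ℝ) := by
    rw [Real.rpow_add hK p 2, hKr p, div_self hp0.ne', Real.rpow_one]
  have hKq : K ^ (q + 2) = ((p + 3) / 3) ^ (q / p) * K ^ (2:ℝ) := by
    rw [Real.rpow_add hK q 2, hKr q]
  refine ⟨?_, ?_, ?_⟩
  · rw [T2, Tp, hKp]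
    have h3 : (p:ℝ) + 2 + 1 = p + 3 := by ring
    rw [h3]
    field_simp
    ring
  · rw [T2]
    have hE : (3 / (p + 3)) ^ (2 / p) = (K ^ (2:ℝ))⁻¹ := by
      rw [show (3:ℝ) / (p + 3) = ((p + 3) / 3)⁻¹ by rw [inv_div],
        Real.inv_rpow hbase0, hK2]
    have step : π - a < 3 * π * (K ^ (2:ℝ))⁻¹ := by rw [← hE]; linarith
    have key : (π - a) * K ^ (2:ℝ) < 3 * π := by
      calc (π - a) * K ^ (2:ℝ) < 3 * π * (K ^ (2:ℝ))⁻¹ * K ^ (2:ℝ) :=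
            mul_lt_mul_of_pos_right step hK2pos
        _ = 3 * π := by field_simp
    rw [show (2:ℝ) + 1 = 3 by norm_num, div_lt_iff₀ (by norm_num : (0:ℝ) < 3)]
    nlinarith
  · rw [T2, Tq, hKq]
    have h1 : 1 < q / p := (one_lt_div hp0).2 hpq
    have hBe := one_add_mul_self_lt_rpow_one_add (s := p / 3)
      (by linarith) (by positivity) h1
    have e1 : (1:ℝ) + p / 3 = (p + 3) / 3 := by ring
    have e2 : q / p * (p / 3) = q / 3 := by field_simp
    rw [e1, e2] at hBe
    have hB : (q + 3) / 3 < ((p + 3) / 3) ^ (q / p) := by linarith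
    rw [show (2:ℝ) + 1 = 3 by norm_num, show q + 2 + 1 = q + 3 by ring,
      div_lt_div_iff₀ (by norm_num : (0:ℝ) < 3) (by linarith : (0:ℝ) < q + 3)]
    have hprod : 0 < K ^ (2:ℝ) * (π - a) := mul_pos hK2pos hpa
    linarith [mul_lt_mul_of_pos_right hB hprod]
end

section
/- Let d ≥ 1, 4/d < p < q < 4/(d−1), μ = 1, δ̃ := 2π − ‖∂_yρ‖_{L²(𝕋)}² ∈ (0, 2π), and suppose ρ ∈ H¹(𝕋) and P^λ ∈ H¹(ℝ^d) satisfy the splitting identities ‖∂_y(ρP)‖₂² = ‖∂_yρ‖_{L²_y}²‖P‖_{L²_x}², ‖∇_x(ρP)‖₂² = ‖ρ‖_{L²_y}²‖∇_xP‖_{L²_x}², and ‖ρP‖_r^r = ‖ρ‖_{L^r_y}^r‖P‖_{L^r_x}^r for r ∈ {2, p+2, q+2}. If moreover ‖ρ‖_{L²_y}² ≤ 2π − δ̃', ‖ρ‖_{L^{p+2}_y}^{p+2} ≤ ‖ρ‖_{L²_y}², ‖ρ‖_{L^{q+2}_y}^{q+2} ≥ ‖ρ‖_{L²_y}², and λ‖∂_yρ‖_{L²_y}²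 < δ̃' for some δ̃' > 0, then the product function ψ = ρP satisfies S₁^λ(ψ) − (2/(qd))K^λ(ψ) < 2π·(Ŝ₁^λ(P) − (2/(qd))K̂^λ(P)), where S₁^λ, K^λ and Ŝ₁^λ, K̂^λ are the λ-rescaled action and semivirial functionals on ℝ^d×𝕋 and ℝ^d respectively. -/
open Real

set_option maxHeartbeats 1000000

/-- μ = 1: symmetry-breaking inequality for the product test function `ψ = ρP`.
Here `rM = ‖ρ‖_{L²_y}²`, `rD = ‖∂_yρ‖_{L²_y}²`, `rP = ‖ρ‖_{L^{p+2}_y}^{p+2}`,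
`rQ = ‖ρ‖_{L^{q+2}_y}^{q+2}`, and `PM, PGx, PPp, PPq` are the corresponding quantities of `P`
on `ℝ^d`; the quantities `ψM, ψGy, ψGx, ψPp, ψPq` of `ψ` are given by the splitting identities.
Conclusion: `S₁^λ(ψ) − (2/(qd))K^λ(ψ) < 2π(Ŝ₁^λ(P) − (2/(qd))K̂^λ(P))`. -/
theorem stmt_19 (d : ℕ) (hd : 1 ≤ d) (p q : ℝ)
    (hp : 4 < p * (d : ℝ)) (hpq : p < q) (hq : q * ((d : ℝ) - 1) < 4)
    (lam δ' : ℝ) (hlam : 0 < lam) (hδ' : 0 < δ')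
    (rM rD rP rQ : ℝ) (hrM : 0 ≤ rM) (hrD : 0 ≤ rD) (hrP : 0 ≤ rP) (hrQ : 0 ≤ rQ)
    (PM PGx PPp PPq : ℝ) (hPM : 0 < PM) (hPGx : 0 ≤ PGx) (hPPp : 0 ≤ PPp) (hPPq : 0 ≤ PPq)
    (hδtil : 0 < 2 * π - rD)
    (h1 : rM ≤ 2 * π - δ') (h2 : rP ≤ rM) (h3 : rM ≤ rQ) (h4 : lam * rD < δ')
    (ψM ψGy ψGx ψPp ψPq : ℝ)
    (hψM : ψM = rM * PM) (hψGy : ψGy = rD * PM) (hψGx : ψGx = rM * PGx)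
    (hψPp : ψPp = rP * PPp) (hψPq : ψPq = rQ * PPq) :
    (1 / 2 * ψM + lam / 2 * ψGy + 1 / 2 * ψGx + 1 / (p + 2) * ψPp
        - lam ^ (q / p - 1) / (q + 2) * ψPq)
      - 2 / (q * (d : ℝ)) *
        (ψGx + p * (d : ℝ) / (2 * (p + 2)) * ψPp
          - lam ^ (q / p - 1) * q * (d : ℝ) / (2 * (q + 2)) * ψPq)
    < 2 * π *
      ((1 / 2 * PM + 1 / 2 * PGx + 1 / (p + 2) * PPp
          - lam ^ (q / p - 1) / (q + 2) * PPq)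
        - 2 / (q * (d : ℝ)) *
          (PGx + p * (d : ℝ) / (2 * (p + 2)) * PPp
            - lam ^ (q / p - 1) * q * (d : ℝ) / (2 * (q + 2)) * PPq)) := by
  subst hψM hψGy hψGx hψPp hψPq
  have hd' : (1:ℝ) ≤ (d:ℝ) := by exact_mod_cast hd
  have hp0 : 0 < p := by nlinarith
  have hq0 : 0 < q := by linarith
  have hqd : 4 < q * (d:ℝ) := by nlinarith
  have hqd0 : q * (d:ℝ) ≠ 0 := by positivity
  have hp2 : (0:ℝ) < p + 2 := by linarith
  have hq2 : (0:ℝ) < q + 2 := by linarith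
  have hp2' : p + 2 ≠ 0 := ne_of_gt hp2
  have hq2' : q + 2 ≠ 0 := ne_of_gt hq2
  set A := lam ^ (q / p - 1) with hA
  set c1 : ℝ := 1/2 - 2/(q*(d:ℝ)) with hc1
  set c2 : ℝ := 1/(p+2) - 2/(q*(d:ℝ)) * (p*(d:ℝ)/(2*(p+2))) with hc2
  have hc1n : 0 ≤ c1 := by
    rw [hc1, sub_nonneg, div_le_div_iff₀ (by positivity) (by norm_num)]
    linarith
  have hc2n : 0 ≤ c2 := by
    have e : 2/(q*(d:ℝ)) * (p*(d:ℝ)/(2*(p+2))) = p/(q*(p+2)) := by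
      field_simp
    rw [hc2, e, sub_nonneg, div_le_div_iff₀ (by positivity) hp2]
    nlinarith
  clear_value A c1 c2
  have hEL : (1 / 2 * (rM*PM) + lam / 2 * (rD*PM) + 1 / 2 * (rM*PGx) + 1 / (p + 2) * (rP*PPp)
        - A / (q + 2) * (rQ*PPq))
      - 2 / (q * (d : ℝ)) *
        ((rM*PGx) + p * (d : ℝ) / (2 * (p + 2)) * (rP*PPp)
          - A * q * (d : ℝ) / (2 * (q + 2)) * (rQ*PPq))
      = 1/2 * (rM + lam*rD) * PM + c1 * (rM*PGx) + c2 * (rP*PPp) := by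
    rw [hc1, hc2]
    field_simp
    ring
  have hER : 2 * π *
      ((1 / 2 * PM + 1 / 2 * PGx + 1 / (p + 2) * PPp - A / (q + 2) * PPq)
        - 2 / (q * (d : ℝ)) *
          (PGx + p * (d : ℝ) / (2 * (p + 2)) * PPp
            - A * q * (d : ℝ) / (2 * (q + 2)) * PPq))
      = 1/2 * (2*π) * PM + c1 * ((2*π)*PGx) + c2 * ((2*π)*PPp) := by
    rw [hc1, hc2]
    field_simp
    ring
  rw [hEL, hER]
  have hsum : rM + lam * rD < 2 * π := by
    have : lam * rD < δ' := h4
    linarith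
  have hrM2 : rM ≤ 2 * π := by linarith
  have hrP2 : rP ≤ 2 * π := by linarith
  have t0 : 1/2 * (rM + lam*rD) * PM < 1/2 * (2*π) * PM := by
    have := mul_lt_mul_of_pos_right hsum hPM
    nlinarith
  have t1 : c1 * (rM*PGx) ≤ c1 * ((2*π)*PGx) :=
    mul_le_mul_of_nonneg_left (mul_le_mul_of_nonneg_right hrM2 hPGx) hc1n
  have t2 : c2 * (rP*PPp) ≤ c2 * ((2*π)*PPp) :=
    mul_le_mul_of_nonneg_left (mul_le_mul_of_nonneg_right hrP2 hPPp) hc2n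
  linarith
end
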